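/- Let M be a matroid on a finite linearly ordered set E. The set of spanning subsets of M (sets of full rank) is the disjoint union, over all bases B of M, of the boolean intervals [B, B ∪ Ext(B)]; consequently the number of spanning subsets equals t(M;1,2). -/

import Mathlib

namespace AB
open Set

variable {α : Type*}

/-- A circuit of a matroid: a minimal dependent set. -/
def Circuit (M : Matroid α) (C : Set α) : Prop :=
  M.Dep C ∧ ∀ D, D ⊂ C → M.Indep D

/-- A cocircuit: a circuit of the dual matroid. -/
def Cocircuit (M : Matroid α) (C : Set α) : Prop := Circuit M✶ C

/-- `b` is internally active for the basis `B`: `b ∈ B` and `b` is the minimum of the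
fundamental cocircuit `C*(B;b)`, the unique cocircuit contained in `(M.E \ B) ∪ {b}`. -/
def IntActive [LinearOrder α] (M : Matroid α) (B : Set α) (b : α) : Prop :=
  b ∈ B ∧ ∃ C, Cocircuit M C ∧ C ⊆ (M.E \ B) ∪ {b} ∧ b ∈ C ∧ ∀ x ∈ C, b ≤ x

/-- `e` is externally active for the basis `B`: `e ∈ M.E \ B` and `e` is the minimum of the
fundamental circuit `C(B;e)`, the unique circuit contained in `B ∪ {e}`. -/
def ExtActive [LinearOrder α] (M : Matroid α) (B : Set α) (e : α) : Prop :=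
  e ∈ M.E \ B ∧ ∃ C, Circuit M C ∧ C ⊆ B ∪ {e} ∧ e ∈ C ∧ ∀ x ∈ C, e ≤ x

/-- `Int(B)`, the set of internally active elements of `B`. -/
def IntSet [LinearOrder α] (M : Matroid α) (B : Set α) : Set α := {b | IntActive M B b}

/-- `Ext(B)`, the set of externally active elements of `B`. -/
def ExtSet [LinearOrder α] (M : Matroid α) (B : Set α) : Set α := {e | ExtActive M B e}

end AB

attribute [local instance] Classical.propDecidable

namespace AB
/-- The Tutte polynomial of an ordered matroid, evaluated at `(x, y)`, via Crapo's
expression in terms of basis activities: `t(M;x,y) = Σ_B x^|Int(B)| y^|Ext(B)|`. -/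
noncomputable def tutteEval {α : Type*} [Fintype α] [LinearOrder α]
    (M : Matroid α) (x y : ℤ) : ℤ :=
  ∑ B ∈ Finset.univ.powerset.filter (fun B : Finset α => M.IsBase ↑B),
    x ^ (AB.IntSet M ↑B).ncard * y ^ (AB.ExtSet M ↑B).ncard
end AB

namespace AB
/-- The rank of a set `X` in a matroid `M`: the largest cardinality of an
independent subset of `X`. -/
noncomputable def rank {α : Type*} (M : Matroid α) (X : Set α) : ℕ :=
  sSup {n : ℕ | ∃ I, I ⊆ X ∧ M.Indep I ∧ I.ncard = n}

/-- A subset is spanning if it has full rank. -/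
def Spanning {α : Type*} (M : Matroid α) (A : Set α) : Prop :=
  A ⊆ M.E ∧ rank M A = rank M M.E
end AB

/-! Scan `A` from the top and keep each element not spanned by the larger elements of `A`; the
kept elements form a basis `B` of `A`, and every other `e ∈ A` is spanned by the elements of `B`
above it, so its fundamental circuit has minimum `e`. Two bases whose intervals share a set `A`
coincide: the largest element of `B₁ ∆ B₂` lies in `A`, but cannot be externally active for the
basis missing it. Each interval has `2 ^ |Ext(B)|` elements, and summing over bases gives Crapo's
expression for `t(M;1,2)`. -/

namespace AB
open Set Matroid
open scoped symmDiff

lemma circuit_iff_isCircuit {α : Type*} {M : Matroid α} {C : Set α} :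
    Circuit M C ↔ M.IsCircuit C := by
  rw [isCircuit_iff_forall_ssubset]; rfl

section Rank

variable {α : Type*} [Finite α] {M : Matroid α}

lemma rank_eq_eRk (X : Set α) : (rank M X : ℕ∞) = M.eRk X := by
  obtain ⟨I, hI⟩ := M.exists_isBasis' X
  have hgreatest : IsGreatest {n | ∃ J, J ⊆ X ∧ M.Indep J ∧ J.ncard = n} I.ncard := by
    refine ⟨⟨I, hI.subset, hI.indep, rfl⟩, ?_⟩
    rintro _ ⟨J, hJX, hJ, rfl⟩
    rw [← Nat.cast_le (α := ℕ∞), (toFinite J).cast_ncard_eq, (toFinite I).cast_ncard_eq,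
      hI.encard_eq_eRk]
    exact M.eRk_le_iff.1 le_rfl hJX hJ
  rw [rank, hgreatest.csSup_eq, (toFinite I).cast_ncard_eq, hI.encard_eq_eRk]

lemma spanning_iff_matroidSpanning {A : Set α} : Spanning M A ↔ M.Spanning A := by
  have : M.Finite := ⟨toFinite _⟩
  rw [Spanning, ← Nat.cast_inj (R := ℕ∞), rank_eq_eRk, rank_eq_eRk, eRk_ground,
    spanning_iff_eRk_le', and_comm, (M.eRk_le_eRank A).ge_iff_eq', eq_comm]

end Rank

section Activity

variable {α : Type*} [LinearOrder α] {M : Matroid α} {B A : Set α} {e : α}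

lemma ExtActive.mem_closure (h : ExtActive M B e) : e ∈ M.closure (B ∩ Ioi e) := by
  obtain ⟨-, C, hC, hCB, heC, hmin⟩ := h
  have hCe : C \ {e} ⊆ B ∩ Ioi e := by
    rintro x ⟨hxC, hxe : x ≠ e⟩
    exact ⟨(hCB hxC).resolve_right hxe, (hmin x hxC).lt_of_ne' hxe⟩
  exact M.closure_subset_closure hCe
    ((circuit_iff_isCircuit.1 hC).mem_closure_sdiff_singleton_of_mem heC)

lemma extActive_iff_mem_closure (hB : M.Indep B) :
    ExtActive M B e ↔ e ∈ M.E \ B ∧ e ∈ M.closure (B ∩ Ioi e) := by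
  refine ⟨fun h ↦ ⟨h.1, h.mem_closure⟩, fun ⟨he, hcl⟩ ↦ ⟨he, ?_⟩⟩
  have hind : M.Indep (B ∩ Ioi e) := hB.subset inter_subset_left
  -- the fundamental circuit of `e` over `B ∩ Ioi e` is the witness
  refine ⟨M.fundCircuit e (B ∩ Ioi e),
    circuit_iff_isCircuit.2 (hind.fundCircuit_isCircuit hcl fun h ↦ lt_irrefl e h.2),
    fun x hx ↦ ?_, M.mem_fundCircuit e _, fun x hx ↦ ?_⟩ <;>
  rcases M.fundCircuit_subset_insert e _ hx with rfl | ⟨hxB, hex⟩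
  exacts [Or.inr rfl, Or.inl hxB, le_rfl, hex.le]

lemma disjoint_extSet : Disjoint B (ExtSet M B) :=
  disjoint_left.2 fun _ heB he ↦ he.1.2 heB

lemma notMem_extSet_of_forall_sdiff_le {B₁ B₂ : Set α} (hB₁ : M.Indep B₁) (he : e ∈ B₁ \ B₂)
    (hmax : ∀ x ∈ B₂ \ B₁, x ≤ e) : e ∉ ExtSet M B₂ := fun hext ↦ by
  have hsub : B₂ ∩ Ioi e ⊆ B₁ \ {e} := fun x ⟨hxB₂, hex⟩ ↦
    ⟨by_contra fun hxB₁ ↦ (hmax x ⟨hxB₂, hxB₁⟩).not_gt hex, hex.ne'⟩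
  exact hB₁.notMem_closure_sdiff_of_mem he.1 (M.closure_subset_closure hsub hext.mem_closure)

/-- The greedy basis of `A` built from the top. -/
def topGreedy (M : Matroid α) (A : Set α) : Set α :=
  {x ∈ A | x ∉ M.closure (A ∩ Ioi x)}

lemma topGreedy_subset : topGreedy M A ⊆ A := fun _ hx ↦ hx.1

section Finite

variable [Finite α]

lemma mem_closure_topGreedy_inter_Ici (hA : A ⊆ M.E) {x : α} (hx : x ∈ A) :
    x ∈ M.closure (topGreedy M A ∩ Ici x) := by
  induction x using WellFoundedGT.induction with
  | _ x IH =>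
  by_cases hxG : x ∈ topGreedy M A
  · exact M.mem_closure_of_mem' ⟨hxG, le_rfl⟩ (hA hx)
  have hxcl : x ∈ M.closure (A ∩ Ioi x) := by_contra fun h ↦ hxG ⟨hx, h⟩
  have hsub : A ∩ Ioi x ⊆ M.closure (topGreedy M A ∩ Ici x) := fun y ⟨hyA, hxy⟩ ↦
    M.closure_subset_closure
      (inter_subset_inter_right _ ((Ici_subset_Ioi.2 hxy).trans Ioi_subset_Ici_self)) (IH y hxy hyA)
  exact M.closure_subset_closure_of_subset_closure hsub hxcl

lemma inter_Ioi_subset_closure_topGreedy (hA : A ⊆ M.E) (x : α) :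
    A ∩ Ioi x ⊆ M.closure (topGreedy M A ∩ Ioi x) := fun _ ⟨hyA, hxy⟩ ↦
  M.closure_subset_closure (inter_subset_inter_right _ (Ici_subset_Ioi.2 hxy))
    (mem_closure_topGreedy_inter_Ici hA hyA)

/-- A circuit inside `topGreedy M A` would have its minimum spanned by larger elements of `A`. -/
lemma topGreedy_indep (hA : A ⊆ M.E) : M.Indep (topGreedy M A) := by
  by_contra hdep
  obtain ⟨C, hCG, hC⟩ :=
    (M.dep_of_not_indep hdep (topGreedy_subset.trans hA)).exists_isCircuit_subset
  obtain ⟨e, heC, hmin⟩ := C.exists_min_image id C.toFinite hC.nonempty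
  have hCe : C \ {e} ⊆ A ∩ Ioi e := fun x ⟨hxC, hxe⟩ ↦
    ⟨topGreedy_subset (hCG hxC), (hmin x hxC).lt_of_ne' hxe⟩
  exact (hCG heC).2 (M.closure_subset_closure hCe (hC.mem_closure_sdiff_singleton_of_mem heC))

lemma topGreedy_isBasis (hA : A ⊆ M.E) : M.IsBasis (topGreedy M A) A :=
  (topGreedy_indep hA).isBasis_of_subset_of_subset_closure topGreedy_subset fun _ hx ↦
    M.closure_subset_closure inter_subset_left (mem_closure_topGreedy_inter_Ici hA hx)

lemma subset_topGreedy_union_extSet (hA : A ⊆ M.E) :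
    A ⊆ topGreedy M A ∪ ExtSet M (topGreedy M A) := by
  intro e heA
  by_cases heG : e ∈ topGreedy M A
  · exact .inl heG
  have hecl : e ∈ M.closure (A ∩ Ioi e) := by_contra fun h ↦ heG ⟨heA, h⟩
  exact .inr <| (extActive_iff_mem_closure (topGreedy_indep hA)).2
    ⟨⟨hA heA, heG⟩, M.closure_subset_closure_of_subset_closure
      (inter_Ioi_subset_closure_topGreedy hA e) hecl⟩

lemma eq_of_subset_of_subset_union_extSet {B₁ B₂ : Set α} (hB₁ : M.Indep B₁) (hB₂ : M.Indep B₂)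
    (h₁ : B₁ ⊆ A) (hA₁ : A ⊆ B₁ ∪ ExtSet M B₁) (h₂ : B₂ ⊆ A) (hA₂ : A ⊆ B₂ ∪ ExtSet M B₂) :
    B₁ = B₂ := by
  by_contra hne
  obtain ⟨e, he, hmax⟩ :=
    (B₁ ∆ B₂).exists_max_image id (toFinite _) (symmDiff_nonempty.2 hne)
  rcases he with he | he
  · exact notMem_extSet_of_forall_sdiff_le hB₁ he (fun x hx ↦ hmax x (.inr hx))
      ((hA₂ (h₁ he.1)).resolve_left he.2)
  · exact notMem_extSet_of_forall_sdiff_le hB₂ he (fun x hx ↦ hmax x (.inl hx))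
      ((hA₁ (h₂ he.1)).resolve_left he.2)

lemma spanning_iff_exists_isBase_subset_subset_union_extSet :
    Spanning M A ↔ ∃ B, M.IsBase B ∧ B ⊆ A ∧ A ⊆ B ∪ ExtSet M B := by
  rw [spanning_iff_matroidSpanning]
  refine ⟨fun hA ↦ ?_, fun ⟨B, hB, hBA, hAB⟩ ↦ hB.spanning.superset hBA ?_⟩
  · exact ⟨topGreedy M A, (topGreedy_isBasis hA.subset_ground).isBase_of_spanning hA,
      topGreedy_subset, subset_topGreedy_union_extSet hA.subset_ground⟩
  · exact hAB.trans (union_subset hB.subset_ground fun _ he ↦ he.1.1)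

end Finite

end Activity

section Counting

variable {α : Type*} [Fintype α] [LinearOrder α] {M : Matroid α}

/-- The boolean interval `[B, B ∪ Ext(B)]`. -/
noncomputable def extInterval (M : Matroid α) (B : Finset α) : Finset (Finset α) :=
  Finset.Icc B (B ∪ (ExtSet M ↑B).toFinset)

lemma mem_extInterval {A B : Finset α} :
    A ∈ extInterval M B ↔ (↑B : Set α) ⊆ ↑A ∧ (↑A : Set α) ⊆ ↑B ∪ ExtSet M ↑B := by
  rw [extInterval, Finset.mem_Icc, ← Finset.coe_subset, ← Finset.coe_subset, Finset.coe_union,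
    coe_toFinset]

lemma card_extInterval (B : Finset α) : (extInterval M B).card = 2 ^ (ExtSet M ↑B).ncard := by
  rw [extInterval, Finset.card_Icc_finset Finset.subset_union_left,
    Finset.card_union_of_disjoint
      (by rw [← Finset.disjoint_coe, coe_toFinset]; exact disjoint_extSet),
    add_tsub_cancel_left, ncard_eq_toFinset_card']

lemma filter_spanning_eq_biUnion_extInterval :
    Finset.univ.powerset.filter (fun A : Finset α => Spanning M ↑A) =
      (Finset.univ.powerset.filter (fun B : Finset α => M.IsBase ↑B)).biUnion (extInterval M) := by
  ext A
  simp only [Finset.mem_filter, Finset.mem_powerset, Finset.subset_univ, true_and,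
    Finset.mem_biUnion, mem_extInterval, spanning_iff_exists_isBase_subset_subset_union_extSet]
  constructor
  · rintro ⟨B, hB, hBA⟩
    obtain ⟨B, rfl⟩ := (toFinite B).exists_finset_coe
    exact ⟨B, hB, hBA⟩
  · rintro ⟨B, hB, hBA⟩
    exact ⟨B, hB, hBA⟩

lemma card_filter_spanning :
    (Finset.univ.powerset.filter (fun A : Finset α => Spanning M ↑A)).card =
      ∑ B ∈ Finset.univ.powerset.filter (fun B : Finset α => M.IsBase ↑B),
        2 ^ (ExtSet M ↑B).ncard := by
  rw [filter_spanning_eq_biUnion_extInterval, Finset.card_biUnion]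
  · exact Finset.sum_congr rfl fun B _ ↦ card_extInterval B
  intro B₁ hB₁ B₂ hB₂ hne
  refine Finset.disjoint_left.2 fun A h₁ h₂ ↦ hne ?_
  rw [mem_extInterval] at h₁ h₂
  exact Finset.coe_injective <| eq_of_subset_of_subset_union_extSet
    (Finset.mem_filter.1 hB₁).2.indep (Finset.mem_filter.1 hB₂).2.indep h₁.1 h₁.2 h₂.1 h₂.2

end Counting

end AB

theorem stmt_9_general {α : Type*} [Fintype α] [LinearOrder α] (M : Matroid α) :
    (∀ A : Set α, AB.Spanning M A ↔
      ∃ B : Set α, M.IsBase B ∧ B ⊆ A ∧ A ⊆ B ∪ AB.ExtSet M B) ∧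
    (∀ B₁ B₂ : Set α, M.IsBase B₁ → M.IsBase B₂ → B₁ ≠ B₂ →
      ∀ A : Set α, ¬ ((B₁ ⊆ A ∧ A ⊆ B₁ ∪ AB.ExtSet M B₁) ∧
        (B₂ ⊆ A ∧ A ⊆ B₂ ∪ AB.ExtSet M B₂))) ∧
    (((Finset.univ.powerset.filter (fun A : Finset α => AB.Spanning M ↑A)).card : ℤ)
      = AB.tutteEval M 1 2) := by
  refine ⟨fun _ ↦ AB.spanning_iff_exists_isBase_subset_subset_union_extSet,
    fun B₁ B₂ hB₁ hB₂ hne A ⟨⟨h₁, hA₁⟩, h₂, hA₂⟩ ↦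
      hne (AB.eq_of_subset_of_subset_union_extSet hB₁.indep hB₂.indep h₁ hA₁ h₂ hA₂), ?_⟩
  rw [AB.card_filter_spanning, AB.tutteEval]
  push_cast
  simp only [one_pow, one_mul]

/-- The spanning subsets of `M` are the disjoint union, over all bases
`B`, of the boolean intervals `[B, B ∪ Ext(B)]`; consequently the number of spanning
subsets equals `t(M;1,2)`. -/
theorem stmt_9 {α : Type*} [Fintype α] [LinearOrder α] (M : Matroid α)
    (hE : M.E = Set.univ) :
    (∀ A : Set α, AB.Spanning M A ↔
      ∃ B : Set α, M.IsBase B ∧ B ⊆ A ∧ A ⊆ B ∪ AB.ExtSet M B) ∧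
    (∀ B₁ B₂ : Set α, M.IsBase B₁ → M.IsBase B₂ → B₁ ≠ B₂ →
      ∀ A : Set α, ¬ ((B₁ ⊆ A ∧ A ⊆ B₁ ∪ AB.ExtSet M B₁) ∧
        (B₂ ⊆ A ∧ A ⊆ B₂ ∪ AB.ExtSet M B₂))) ∧
    (((Finset.univ.powerset.filter (fun A : Finset α => AB.Spanning M ↑A)).card : ℤ)
      = AB.tutteEval M 1 2) :=
  stmt_9_general M
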